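/- Let H be a square-free graph and C = θ γ₁ γ₂ ⋯ γ_k θ a cycle in H of length at least 3, with gadget J as follows: a cycle s v₁ ⋯ v_k s, pendant u_i adjacent to v_i pinned to γ_i, and pendant x adjacent to s pinned to θ. Then for each γ ∈ {γ₁, γ_k}, there is exactly one homomorphism σ : J → H with σ(u_i) = γ_i, σ(x) = θ, and σ(s) = γ. -/

import Mathlib

/-!
Two consecutive cycle edges `σ i σ (i+1)` and `γ i γ (i+1)`, joined by the pendant edges, form
a closed walk of length four; square-freeness forces it to degenerate, so `σ i = γ (i+1)` or
`σ (i+1) = γ i`. Once one of the two alternatives holds at a vertex, distinctness of the `γ`'s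
propagates it around the whole cycle, so `σ` is the rotation of `γ` by one step in the direction
fixed by `σ s`.
-/

theorem Fin.sub_one_ne_add_one {n : ℕ} (hn : 2 ≤ n) (i : Fin (n + 1)) : i - 1 ≠ i + 1 := by
  intro h
  have h2 : (1 + 1 : Fin (n + 1)) = 0 := by
    rw [← sub_eq_zero.mpr h.symm]
    abel
  rw [Fin.ext_iff, Fin.val_add, Fin.val_one'] at h2
  simp [Nat.mod_eq_of_lt (show 2 < n + 1 by omega)] at h2

namespace SimpleGraph

variable {V : Type*} {n : ℕ}

def FourCycleFree (G : SimpleGraph V) : Prop :=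
  ∀ a b c d : V, a ≠ b → b ≠ c → c ≠ d → d ≠ a → a ≠ c → b ≠ d →
    ¬(G.Adj a b ∧ G.Adj b c ∧ G.Adj c d ∧ G.Adj d a)

theorem FourCycleFree.eq_or_eq {G : SimpleGraph V} (hG : G.FourCycleFree) {a b p q : V}
    (hab : G.Adj a b) (hap : G.Adj a p) (hbq : G.Adj b q) (hpq : G.Adj p q) :
    a = q ∨ b = p := by
  by_contra! h
  exact hG a b q p hab.ne hbq.ne hpq.ne' hap.ne' h.1 h.2 ⟨hab, hbq, hpq.symm, hap.symm⟩

/-- Addition in `Fin (n + 1)` wraps around, so this says that `f` maps the cycle `0 1 ⋯ n 0`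
homomorphically into `G`. -/
def IsCyclicWalk (G : SimpleGraph V) (f : Fin (n + 1) → V) : Prop :=
  ∀ i, G.Adj (f i) (f (i + 1))

/-- A pinned homomorphism of the gadget: `σ 0` is the image of `s`, `σ i` that of `v_i`, and the
pendant of `v_i` (of `s` for `i = 0`) is pinned to `c i`. -/
def IsGadgetHom (G : SimpleGraph V) (c σ : Fin (n + 1) → V) : Prop :=
  G.IsCyclicWalk σ ∧ ∀ i, G.Adj (σ i) (c i)

variable {G : SimpleGraph V} {c σ : Fin (n + 1) → V}

theorem IsCyclicWalk.comp_neg (hc : G.IsCyclicWalk c) : G.IsCyclicWalk (fun i ↦ c (-i)) := by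
  intro i
  convert (hc (-(i + 1))).symm using 2
  abel

theorem IsGadgetHom.comp_neg (hσ : G.IsGadgetHom c σ) :
    G.IsGadgetHom (fun i ↦ c (-i)) (fun i ↦ σ (-i)) :=
  ⟨hσ.1.comp_neg, fun i ↦ hσ.2 (-i)⟩

theorem IsCyclicWalk.isGadgetHom_add_one (hc : G.IsCyclicWalk c) :
    G.IsGadgetHom c (fun i ↦ c (i + 1)) :=
  ⟨fun i ↦ hc (i + 1), fun i ↦ (hc i).symm⟩

theorem IsCyclicWalk.isGadgetHom_sub_one (hc : G.IsCyclicWalk c) :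
    G.IsGadgetHom c (fun i ↦ c (i - 1)) :=
  ⟨fun i ↦ by simpa using hc (i - 1), fun i ↦ by simpa using hc (i - 1)⟩

theorem IsGadgetHom.eq_sub_one (hG : G.FourCycleFree) (hn : 2 ≤ n) (hinj : c.Injective)
    (hc : G.IsCyclicWalk c) (hσ : G.IsGadgetHom c σ) (h0 : σ 0 = c (-1)) :
    σ = fun i ↦ c (i - 1) := by
  funext i
  induction i using Fin.induction with
  | zero => simpa using h0
  | succ j ih =>
    rw [← Fin.coeSucc_eq_succ]
    rcases hG.eq_or_eq (hσ.1 _) (hσ.2 _) (hσ.2 _) (hc j.castSucc) with h | h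
    · exact absurd (hinj (ih.symm.trans h)) (Fin.sub_one_ne_add_one hn _)
    · rwa [add_sub_cancel_right]

theorem IsGadgetHom.eq_add_one (hG : G.FourCycleFree) (hn : 2 ≤ n) (hinj : c.Injective)
    (hc : G.IsCyclicWalk c) (hσ : G.IsGadgetHom c σ) (h0 : σ 0 = c 1) :
    σ = fun i ↦ c (i + 1) := by
  have := hσ.comp_neg.eq_sub_one hG hn (hinj.comp neg_injective) hc.comp_neg (by simpa using h0)
  funext i
  simpa [add_comm] using congrFun this (-i)

theorem existsUnique_isGadgetHom (hG : G.FourCycleFree) (hn : 2 ≤ n) (hinj : c.Injective)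
    (hc : G.IsCyclicWalk c) {g : V} (hg : g = c 1 ∨ g = c (-1)) :
    ∃! σ, G.IsGadgetHom c σ ∧ σ 0 = g := by
  rcases hg with rfl | rfl
  · exact ⟨_, ⟨hc.isGadgetHom_add_one, by simp⟩, fun σ hσ ↦ hσ.1.eq_add_one hG hn hinj hc hσ.2⟩
  · exact ⟨_, ⟨hc.isGadgetHom_sub_one, by simp⟩, fun σ hσ ↦ hσ.1.eq_sub_one hG hn hinj hc hσ.2⟩

theorem isCyclicWalk_iff {f : Fin (n + 1) → V} :
    G.IsCyclicWalk f ↔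
      (∀ i : ℕ, (h : i < n) → G.Adj (f ⟨i, Nat.lt_succ_of_lt h⟩) (f ⟨i + 1, Nat.succ_lt_succ h⟩)) ∧
        G.Adj (f ⟨n, n.lt_succ_self⟩) (f 0) := by
  refine ⟨fun h ↦ ⟨fun i hi ↦ ?_, ?_⟩, fun ⟨h, hlast⟩ i ↦ ?_⟩
  · have := h (Fin.castSucc ⟨i, hi⟩)
    rw [Fin.coeSucc_eq_succ] at this
    exact this
  · exact Fin.last_add_one n ▸ h (Fin.last n)
  · induction i using Fin.lastCases with
    | last => exact (Fin.last_add_one n).symm ▸ hlast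
    | cast j => exact Fin.coeSucc_eq_succ.symm ▸ h j j.isLt

theorem forall_adj_val_iff {σ : Fin (n + 1) → V} {γ : ℕ → V} :
    (∀ i, G.Adj (σ i) (γ i)) ↔
      (∀ i : ℕ, 1 ≤ i → (h : i ≤ n) → G.Adj (σ ⟨i, Nat.lt_succ_of_le h⟩) (γ i)) ∧
        G.Adj (σ 0) (γ 0) := by
  refine ⟨fun h ↦ ⟨fun i _ hi ↦ h ⟨i, Nat.lt_succ_of_le hi⟩, h 0⟩, fun ⟨h, h0⟩ i ↦ ?_⟩
  induction i using Fin.cases with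
  | zero => exact h0
  | succ j => exact h (j + 1) (by omega) j.isLt

end SimpleGraph

/-- For the cycle vertex gadget built on a cycle `θ γ₁ … γ_k θ` (length ≥ 3, `θ = γ 0`) in a
square-free graph, for each `g ∈ {γ₁, γ_k}` there is exactly one homomorphism respecting the
pins with `σ(s) = g`. -/
theorem stmt10 {V : Type*}
    (H : SimpleGraph V)
    (hsf : ∀ a b c d : V, a ≠ b → b ≠ c → c ≠ d → d ≠ a → a ≠ c → b ≠ d →
      ¬(H.Adj a b ∧ H.Adj b c ∧ H.Adj c d ∧ H.Adj d a))
    (k : ℕ) (hk : 2 ≤ k)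
    (γ : ℕ → V)
    (hdist : ∀ i j, i ≤ k → j ≤ k → i ≠ j → γ i ≠ γ j)
    (hwalk : ∀ i < k, H.Adj (γ i) (γ (i + 1)))
    (hclose : H.Adj (γ k) (γ 0)) :
    ∀ g : V, (g = γ 1 ∨ g = γ k) →
      ∃! σ : Fin (k + 1) → V,
        (∀ i : ℕ, (h : i < k) →
          H.Adj (σ ⟨i, by omega⟩) (σ ⟨i + 1, by omega⟩)) ∧
        H.Adj (σ ⟨k, by omega⟩) (σ 0) ∧
        (∀ i : ℕ, 1 ≤ i → (h : i ≤ k) → H.Adj (σ ⟨i, by omega⟩) (γ i)) ∧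
        H.Adj (σ 0) (γ 0) ∧
        σ 0 = g := by
  intro g hg
  set c : Fin (k + 1) → V := fun i ↦ γ i
  have hinj : c.Injective := fun i j h ↦
    Fin.ext (by_contra fun hij ↦ hdist i j (by omega) (by omega) hij h)
  have hc : H.IsCyclicWalk c := SimpleGraph.isCyclicWalk_iff.mpr ⟨hwalk, hclose⟩
  have hg' : g = c 1 ∨ g = c (-1) := by
    simpa [c, Fin.val_one', Nat.mod_eq_of_lt (show 1 < k + 1 by omega), Fin.coe_neg_one] using hg
  refine (existsUnique_congr fun σ ↦ ?_).mpr
    (SimpleGraph.existsUnique_isGadgetHom hsf hk hinj hc hg')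
  rw [SimpleGraph.IsGadgetHom, SimpleGraph.isCyclicWalk_iff, SimpleGraph.forall_adj_val_iff]
  simp only [and_assoc]
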